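/- Let Ψ be a nontrivial radial Blaschke Minkowski homomorphism on star bodies in R^n. For star bodies L_1,...,L_{n-1}, 2 ≤ m ≤ n-1, and 0 ≤ i ≤ n-1: W̃_i(Ψ(L_1,...,L_{n-1}))^m ≤ ∏_{j=1}^m W̃_i(Ψ(L_j,...,L_j, L_{m+1},...,L_{n-1})) (with L_j appearing m times in the j-th factor), with equality if and only if L_1,...,L_m are dilates. -/

import Mathlib

open MeasureTheory Metric
open scoped RealInnerProductSpace

noncomputable section

/-- Euclidean space ℝⁿ. -/
abbrev Euc (n : ℕ) := EuclideanSpace ℝ (Fin n)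

/-- The unit sphere S^{n-1} ⊂ ℝⁿ. -/
abbrev Sph (n : ℕ) := Metric.sphere (0 : Euc n) 1

/-- Spherical Lebesgue measure on S^{n-1}. -/
def sphMeasure (n : ℕ) [NeZero n] : Measure (Sph n) := volume.toSphere

/-- A star body (with respect to the origin) in ℝⁿ, described by its continuous
positive radial function on the unit sphere. -/
structure StarBody (n : ℕ) where
  radial : C(Sph n, ℝ)
  pos : ∀ u, 0 < radial u

/-- Two star bodies are dilates if their radial functions are proportional. -/
def Dilates (n : ℕ) (K L : StarBody n) : Prop :=
  ∃ c : ℝ, 0 < c ∧ ∀ u, K.radial u = c * L.radial u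

/-- The i-th dual quermassintegral W̃_i(L) = (1/n) ∫ ρ(L,u)^{n-i} du. -/
def dualQuermass (n : ℕ) [NeZero n] (i : ℕ) (L : StarBody n) : ℝ :=
  (1 / n : ℝ) * ∫ u, L.radial u ^ (n - i) ∂(sphMeasure n)

/-!
Write `ρ = ρ(Ψ L, ·)` and `h j = ρ(Ψ(L_j, …, L_j, L_{m+1}, …), ·)`. Since
`ρ(Ψ L, η e) = ∫ ∏ₖ ρ(L_k, η u) dμ(u)`, Hölder's inequality for the `m` functions
`u ↦ ρ(L_j, η u)^m ∏_{k > m} ρ(L_k, η u)` gives `ρ^m ≤ ∏ⱼ h j` pointwise, and Hölder's inequality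
on the sphere, applied to the functions `h j ^ (n - i)`, turns this into the inequality for `W̃_i`.
Both Hölder inequalities are proved by AM–GM after normalising the functions to have integral one,
which also gives their equality case: the functions are proportional almost everywhere. In the
equality case the outer inequality makes the `h j` proportional, and the inner one, read off at a
point of the support of `μ` and moved around by the transitive action, makes the `ρ(L_j, ·)`
proportional.
-/

section GeometricMean

variable {m : ℕ}

lemma prod_rpow_inv_le_sum_div (hm : m ≠ 0) {z : Fin m → ℝ} (hz : ∀ j, 0 ≤ z j) :
    ∏ j, z j ^ (m⁻¹ : ℝ) ≤ (∑ j, z j) / m := by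
  have hw : ∑ _j : Fin m, (m⁻¹ : ℝ) = 1 := by simp [hm]
  calc ∏ j, z j ^ (m⁻¹ : ℝ) ≤ ∑ j, (m⁻¹ : ℝ) * z j :=
        Real.geom_mean_le_arith_mean_weighted _ _ _ (fun _ _ => by positivity) hw fun j _ => hz j
    _ = (∑ j, z j) / m := by rw [← Finset.mul_sum, inv_mul_eq_div]

lemma eq_of_prod_rpow_inv_eq_sum_div (hm : m ≠ 0) {z : Fin m → ℝ} (hz : ∀ j, 0 ≤ z j)
    (h : ∏ j, z j ^ (m⁻¹ : ℝ) = (∑ j, z j) / m) (j k : Fin m) : z j = z k := by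
  have hw : ∑ _j : Fin m, (m⁻¹ : ℝ) = 1 := by simp [hm]
  rw [div_eq_inv_mul, Finset.mul_sum] at h
  exact (Real.geom_mean_eq_arith_mean_weighted_iff_of_pos _ _ _ (fun _ _ => by positivity) hw
    fun j _ => hz j).1 h j (Finset.mem_univ _) k (Finset.mem_univ _)

lemma pow_pow_le_prod_pow {a : ℝ} {b : Fin m → ℝ} (ha : 0 ≤ a) (h : a ^ m ≤ ∏ j, b j)
    (p : ℕ) : (a ^ p) ^ m ≤ ∏ j, b j ^ p := by
  rw [← pow_mul, mul_comm, pow_mul, Finset.prod_pow]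
  exact pow_le_pow_left₀ (pow_nonneg ha m) h p

lemma prod_rpow_inv_pow (hm : m ≠ 0) {g : Fin m → ℝ} (hg : ∀ j, 0 ≤ g j) :
    (∏ j, g j ^ (m⁻¹ : ℝ)) ^ m = ∏ j, g j := by
  rw [← Finset.prod_pow]
  exact Finset.prod_congr rfl fun j _ => Real.rpow_inv_natCast_pow (hg j) hm

lemma le_prod_rpow_inv_of_pow_le_prod (hm : m ≠ 0) {a : ℝ} {g : Fin m → ℝ} (ha : 0 ≤ a)
    (hg : ∀ j, 0 ≤ g j) (h : a ^ m ≤ ∏ j, g j) : a ≤ ∏ j, g j ^ (m⁻¹ : ℝ) := by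
  rw [← pow_le_pow_iff_left₀ ha (Finset.prod_nonneg fun j _ => Real.rpow_nonneg (hg j) _) hm,
    prod_rpow_inv_pow hm hg]
  exact h

lemma prod_rpow_inv_pow_mul (hm : m ≠ 0) {ℓ : Fin m → ℝ} {r : ℝ} (hℓ : ∀ j, 0 ≤ ℓ j)
    (hr : 0 ≤ r) : ∏ j, (ℓ j ^ m * r) ^ (m⁻¹ : ℝ) = (∏ j, ℓ j) * r := by
  simp_rw [Real.mul_rpow (pow_nonneg (hℓ _) m) hr, Real.pow_rpow_inv_natCast (hℓ _) hm,
    Finset.prod_mul_distrib, Finset.prod_const, Finset.card_univ, Fintype.card_fin,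
    Real.rpow_inv_natCast_pow hr hm]

end GeometricMean

section Holder

variable {X : Type*} [MeasurableSpace X] {ν : Measure X} {m : ℕ}

lemma integrable_prod_rpow_inv (hm : m ≠ 0) {F : Fin m → X → ℝ} (hF : ∀ j, Integrable (F j) ν)
    (hF0 : ∀ j x, 0 ≤ F j x) : Integrable (fun x => ∏ j, F j x ^ (m⁻¹ : ℝ)) ν := by
  refine ((integrable_finsetSum Finset.univ fun j _ => hF j).div_const (m : ℝ)).mono' ?_ ?_
  · exact Finset.aestronglyMeasurable_fun_prod _ fun j _ =>
      (Real.continuous_rpow_const (by positivity)).comp_aestronglyMeasurable (hF j).1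
  · refine ae_of_all _ fun x => ?_
    rw [Real.norm_of_nonneg (Finset.prod_nonneg fun j _ => by have := hF0 j x; positivity)]
    simpa using prod_rpow_inv_le_sum_div hm (hF0 · x)

lemma integral_sum_div_eq_one (hm : m ≠ 0) {G : Fin m → X → ℝ} (hG : ∀ j, Integrable (G j) ν)
    (hG1 : ∀ j, ∫ x, G j x ∂ν = 1) : ∫ x, (∑ j, G j x) / m ∂ν = 1 := by
  rw [integral_div, integral_finsetSum Finset.univ fun j _ => hG j]
  simp [hG1, hm]

lemma integral_prod_rpow_inv_le_one (hm : m ≠ 0) {G : Fin m → X → ℝ}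
    (hG : ∀ j, Integrable (G j) ν) (hG0 : ∀ j x, 0 ≤ G j x) (hG1 : ∀ j, ∫ x, G j x ∂ν = 1) :
    ∫ x, ∏ j, G j x ^ (m⁻¹ : ℝ) ∂ν ≤ 1 := by
  calc ∫ x, ∏ j, G j x ^ (m⁻¹ : ℝ) ∂ν ≤ ∫ x, (∑ j, G j x) / m ∂ν :=
        integral_mono (integrable_prod_rpow_inv hm hG hG0)
          ((integrable_finsetSum Finset.univ fun j _ => hG j).div_const _)
          fun x => prod_rpow_inv_le_sum_div hm (hG0 · x)
    _ = 1 := integral_sum_div_eq_one hm hG hG1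

lemma ae_eq_of_integral_prod_rpow_inv_eq_one (hm : m ≠ 0) {G : Fin m → X → ℝ}
    (hG : ∀ j, Integrable (G j) ν) (hG0 : ∀ j x, 0 ≤ G j x) (hG1 : ∀ j, ∫ x, G j x ∂ν = 1)
    (h : ∫ x, ∏ j, G j x ^ (m⁻¹ : ℝ) ∂ν = 1) : ∀ᵐ x ∂ν, ∀ j k, G j x = G k x := by
  have hae := (integral_eq_iff_of_ae_le (integrable_prod_rpow_inv hm hG hG0)
    ((integrable_finsetSum Finset.univ fun j _ => hG j).div_const _)
    (ae_of_all _ fun x => prod_rpow_inv_le_sum_div hm (hG0 · x))).1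
    (h.trans (integral_sum_div_eq_one hm hG hG1).symm)
  filter_upwards [hae] with x hx
  exact eq_of_prod_rpow_inv_eq_sum_div hm (hG0 · x) hx

lemma integral_pos_of_forall_pos (hν : ν ≠ 0) {f : X → ℝ} (hf : Integrable f ν)
    (hpos : ∀ x, 0 < f x) : 0 < ∫ x, f x ∂ν := by
  rw [integral_pos_iff_support_of_nonneg (fun x => (hpos x).le) hf,
    Function.support_eq_univ fun x => (hpos x).ne']
  exact Measure.measure_univ_pos.2 hν

lemma integral_div_integral_self {f : X → ℝ} (hf : ∫ x, f x ∂ν ≠ 0) :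
    ∫ x, f x / (∫ y, f y ∂ν) ∂ν = 1 := by
  rw [integral_div, div_self hf]

lemma pow_integral_prod_rpow_inv_eq (hm : m ≠ 0) {F : Fin m → X → ℝ}
    (hF0 : ∀ j x, 0 ≤ F j x) (hFint : ∀ j, 0 < ∫ x, F j x ∂ν) :
    (∫ x, ∏ j, F j x ^ (m⁻¹ : ℝ) ∂ν) ^ m = (∏ j, ∫ x, F j x ∂ν) *
      (∫ x, ∏ j, (F j x / ∫ y, F j y ∂ν) ^ (m⁻¹ : ℝ) ∂ν) ^ m := by
  have hsplit : ∀ x, ∏ j, F j x ^ (m⁻¹ : ℝ) = (∏ j, (∫ y, F j y ∂ν) ^ (m⁻¹ : ℝ)) *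
      ∏ j, (F j x / ∫ y, F j y ∂ν) ^ (m⁻¹ : ℝ) := fun x => by
    rw [← Finset.prod_mul_distrib]
    refine Finset.prod_congr rfl fun j _ => ?_
    rw [Real.div_rpow (hF0 j x) (hFint j).le, mul_div_cancel₀ _
      (Real.rpow_pos_of_pos (hFint j) _).ne']
  simp_rw [hsplit, integral_const_mul, mul_pow, ← Finset.prod_pow]
  congr 1
  exact Finset.prod_congr rfl fun j _ => Real.rpow_inv_natCast_pow (hFint j).le hm

variable {F : Fin m → X → ℝ}

theorem pow_integral_prod_rpow_inv_le (hm : m ≠ 0) (hν : ν ≠ 0) (hF : ∀ j, Integrable (F j) ν)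
    (hFpos : ∀ j x, 0 < F j x) :
    (∫ x, ∏ j, F j x ^ (m⁻¹ : ℝ) ∂ν) ^ m ≤ ∏ j, ∫ x, F j x ∂ν := by
  have hFint j := integral_pos_of_forall_pos hν (hF j) (hFpos j)
  rw [pow_integral_prod_rpow_inv_eq hm (fun j x => (hFpos j x).le) hFint]
  refine mul_le_of_le_one_right (Finset.prod_nonneg fun j _ => (hFint j).le)
    (pow_le_one₀ (integral_nonneg fun x => Finset.prod_nonneg fun j _ =>
      Real.rpow_nonneg (div_nonneg (hFpos j x).le (hFint j).le) _) ?_)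
  exact integral_prod_rpow_inv_le_one hm (fun j => (hF j).div_const _)
    (fun j x => div_nonneg (hFpos j x).le (hFint j).le)
    fun j => integral_div_integral_self (hFint j).ne'

theorem ae_integral_mul_eq_of_pow_integral_prod_rpow_inv_eq (hm : m ≠ 0) (hν : ν ≠ 0)
    (hF : ∀ j, Integrable (F j) ν) (hFpos : ∀ j x, 0 < F j x)
    (h : (∫ x, ∏ j, F j x ^ (m⁻¹ : ℝ) ∂ν) ^ m = ∏ j, ∫ x, F j x ∂ν) :
    ∀ᵐ x ∂ν, ∀ j k, (∫ y, F k y ∂ν) * F j x = (∫ y, F j y ∂ν) * F k x := by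
  have hFint j := integral_pos_of_forall_pos hν (hF j) (hFpos j)
  rw [pow_integral_prod_rpow_inv_eq hm (fun j x => (hFpos j x).le) hFint,
    mul_eq_left₀ (Finset.prod_pos fun j _ => hFint j).ne',
    pow_eq_one_iff_of_nonneg (integral_nonneg fun x => Finset.prod_nonneg fun j _ =>
      Real.rpow_nonneg (div_nonneg (hFpos j x).le (hFint j).le) _) hm] at h
  filter_upwards [ae_eq_of_integral_prod_rpow_inv_eq_one hm (fun j => (hF j).div_const _)
    (fun j x => div_nonneg (hFpos j x).le (hFint j).le)
    (fun j => integral_div_integral_self (hFint j).ne') h] with x hx j k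
  have := (div_eq_div_iff (hFint j).ne' (hFint k).ne').1 (hx j k)
  linarith

section ProductForm

variable {ℓ : Fin m → X → ℝ} {R : X → ℝ}

lemma integral_prod_mul_eq (hm : m ≠ 0) (hℓ : ∀ j x, 0 < ℓ j x) (hR : ∀ x, 0 < R x) :
    ∫ x, (∏ j, ℓ j x) * R x ∂ν = ∫ x, ∏ j, (ℓ j x ^ m * R x) ^ (m⁻¹ : ℝ) ∂ν := by
  congr 1 with x
  exact (prod_rpow_inv_pow_mul hm (fun j => (hℓ j x).le) (hR x).le).symm

theorem pow_integral_prod_mul_le (hm : m ≠ 0) (hν : ν ≠ 0)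
    (hint : ∀ j, Integrable (fun x => ℓ j x ^ m * R x) ν) (hℓ : ∀ j x, 0 < ℓ j x)
    (hR : ∀ x, 0 < R x) :
    (∫ x, (∏ j, ℓ j x) * R x ∂ν) ^ m ≤ ∏ j, ∫ x, ℓ j x ^ m * R x ∂ν := by
  rw [integral_prod_mul_eq hm hℓ hR]
  exact pow_integral_prod_rpow_inv_le hm hν hint fun j x => mul_pos (pow_pos (hℓ j x) m) (hR x)

theorem ae_integral_mul_pow_eq_of_pow_integral_prod_mul_eq (hm : m ≠ 0) (hν : ν ≠ 0)
    (hint : ∀ j, Integrable (fun x => ℓ j x ^ m * R x) ν) (hℓ : ∀ j x, 0 < ℓ j x)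
    (hR : ∀ x, 0 < R x)
    (h : (∫ x, (∏ j, ℓ j x) * R x ∂ν) ^ m = ∏ j, ∫ x, ℓ j x ^ m * R x ∂ν) :
    ∀ᵐ x ∂ν, ∀ j k, (∫ y, ℓ k y ^ m * R y ∂ν) * ℓ j x ^ m =
      (∫ y, ℓ j y ^ m * R y ∂ν) * ℓ k x ^ m := by
  rw [integral_prod_mul_eq hm hℓ hR] at h
  filter_upwards [ae_integral_mul_eq_of_pow_integral_prod_rpow_inv_eq hm hν hint
    (fun j x => mul_pos (pow_pos (hℓ j x) m) (hR x)) h] with x hx j k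
  exact mul_right_cancel₀ (hR x).ne' (by simpa only [mul_assoc] using hx j k)

end ProductForm

section Comparison

variable {f : X → ℝ} {g : Fin m → X → ℝ}

lemma pow_integral_le_pow_integral_prod_rpow_inv (hm : m ≠ 0) (hf : Integrable f ν)
    (hg : ∀ j, Integrable (g j) ν) (hf0 : ∀ x, 0 ≤ f x) (hg0 : ∀ j x, 0 ≤ g j x)
    (hfg : ∀ x, f x ^ m ≤ ∏ j, g j x) :
    (∫ x, f x ∂ν) ^ m ≤ (∫ x, ∏ j, g j x ^ (m⁻¹ : ℝ) ∂ν) ^ m :=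
  pow_le_pow_left₀ (integral_nonneg hf0) (integral_mono hf (integrable_prod_rpow_inv hm hg hg0)
    fun x => le_prod_rpow_inv_of_pow_le_prod hm (hf0 x) (hg0 · x) (hfg x)) m

theorem pow_integral_le_prod_integral_of_pow_le_prod (hm : m ≠ 0) (hν : ν ≠ 0)
    (hf : Integrable f ν) (hg : ∀ j, Integrable (g j) ν) (hf0 : ∀ x, 0 ≤ f x)
    (hgpos : ∀ j x, 0 < g j x) (hfg : ∀ x, f x ^ m ≤ ∏ j, g j x) :
    (∫ x, f x ∂ν) ^ m ≤ ∏ j, ∫ x, g j x ∂ν :=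
  (pow_integral_le_pow_integral_prod_rpow_inv hm hf hg hf0 (fun j x => (hgpos j x).le) hfg).trans
    (pow_integral_prod_rpow_inv_le hm hν hg hgpos)

end Comparison

lemma pow_integral_pow_eq_prod_of_eq_mul {f g : X → ℝ} {h : Fin m → X → ℝ} {C : ℝ}
    {c : Fin m → ℝ} (hf : ∀ x, f x = C * g x) (hh : ∀ j x, h j x = c j * g x)
    (hC : C ^ m = ∏ j, c j) (p : ℕ) :
    (∫ x, f x ^ p ∂ν) ^ m = ∏ j, ∫ x, h j x ^ p ∂ν := by
  simp_rw [hf, hh, mul_pow, integral_const_mul, mul_pow, Finset.prod_mul_distrib, Finset.prod_pow,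
    ← hC, Finset.prod_const, Finset.card_univ, Fintype.card_fin, ← pow_mul, mul_comm p m]

end Holder

section EqualityCase

variable {X : Type*} [MeasurableSpace X] [TopologicalSpace X] {ν : Measure X}
  [ν.IsOpenPosMeasure] {m : ℕ} {f : X → ℝ} {g : Fin m → X → ℝ}

theorem pow_eq_prod_of_pow_integral_eq_prod (hm : m ≠ 0) (hν : ν ≠ 0) (hf : Continuous f)
    (hg : ∀ j, Continuous (g j)) (hfi : Integrable f ν) (hgi : ∀ j, Integrable (g j) ν)
    (hf0 : ∀ x, 0 ≤ f x) (hgpos : ∀ j x, 0 < g j x) (hfg : ∀ x, f x ^ m ≤ ∏ j, g j x)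
    (h : (∫ x, f x ∂ν) ^ m = ∏ j, ∫ x, g j x ∂ν) (x : X) : f x ^ m = ∏ j, g j x := by
  have hg0 j x : 0 ≤ g j x := (hgpos j x).le
  set P : X → ℝ := fun x => ∏ j, g j x ^ (m⁻¹ : ℝ)
  have hPc : Continuous P := continuous_finsetProd _ fun j _ =>
    (hg j).rpow_const fun _ => .inr (by positivity)
  have hPi : Integrable P ν := integrable_prod_rpow_inv hm hgi hg0
  have hpow : (∫ x, f x ∂ν) ^ m = (∫ x, P x ∂ν) ^ m :=
    le_antisymm (pow_integral_le_pow_integral_prod_rpow_inv hm hfi hgi hf0 hg0 hfg)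
      (h ▸ pow_integral_prod_rpow_inv_le hm hν hgi hgpos)
  have hint : ∫ x, f x ∂ν = ∫ x, P x ∂ν := (pow_left_inj₀ (integral_nonneg hf0)
    (integral_nonneg fun x => Finset.prod_nonneg fun j _ => Real.rpow_nonneg (hg0 j x) _) hm).1 hpow
  have hfP : f = P := (hf.ae_eq_iff_eq ν hPc).1 ((integral_eq_iff_of_ae_le hfi hPi
    (ae_of_all _ fun x => le_prod_rpow_inv_of_pow_le_prod hm (hf0 x) (hg0 · x) (hfg x))).1 hint)
  rw [hfP, prod_rpow_inv_pow hm (hg0 · x)]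

theorem mul_eq_mul_of_pow_integral_eq_prod (hm : m ≠ 0) (hν : ν ≠ 0)
    (hg : ∀ j, Continuous (g j)) (hfi : Integrable f ν) (hgi : ∀ j, Integrable (g j) ν)
    (hf0 : ∀ x, 0 ≤ f x) (hgpos : ∀ j x, 0 < g j x) (hfg : ∀ x, f x ^ m ≤ ∏ j, g j x)
    (h : (∫ x, f x ∂ν) ^ m = ∏ j, ∫ x, g j x ∂ν) (j k : Fin m) (x y : X) :
    g j x * g k y = g j y * g k x := by
  have hHolder : (∫ x, ∏ j, g j x ^ (m⁻¹ : ℝ) ∂ν) ^ m = ∏ j, ∫ x, g j x ∂ν :=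
    le_antisymm (pow_integral_prod_rpow_inv_le hm hν hgi hgpos)
      (h ▸ pow_integral_le_pow_integral_prod_rpow_inv hm hfi hgi hf0
        (fun j x => (hgpos j x).le) hfg)
  have hae := ae_integral_mul_eq_of_pow_integral_prod_rpow_inv_eq hm hν hgi hgpos hHolder
  have hprop : (fun x => (∫ y, g k y ∂ν) * g j x) = fun x => (∫ y, g j y ∂ν) * g k x :=
    ((continuous_const.mul (hg j)).ae_eq_iff_eq ν (continuous_const.mul (hg k))).1
      (by filter_upwards [hae] with x hx using hx j k)
  have hk := integral_pos_of_forall_pos hν (hgi k) (hgpos k)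
  have hx := congrFun hprop x
  have hy := congrFun hprop y
  refine mul_left_cancel₀ hk.ne' ?_
  linear_combination g k y * hx - g k x * hy

end EqualityCase

lemma MeasureTheory.Measure.apply_eq_of_ae_eq_of_mem_support {X Y : Type*} [TopologicalSpace X]
    [MeasurableSpace X] [TopologicalSpace Y] [T2Space Y] {μ : Measure X} {f g : X → Y}
    (hf : Continuous f) (hg : Continuous g) (h : f =ᵐ[μ] g) {x : X} (hx : x ∈ μ.support) :
    f x = g x := by
  by_contra hne
  have hpos := (Measure.mem_support_iff_forall x).1 hx _ ((isOpen_ne_fun hf hg).mem_nhds hne)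
  exact hpos.ne' (ae_iff.1 h)

lemma exists_act_eq {G X : Type*} [Group G] {act : G → X → X}
    (hmul : ∀ η τ x, act (η * τ) x = act η (act τ x)) {e : X} (htrans : ∀ x, ∃ η, act η e = x)
    (x y : X) : ∃ η, act η x = y := by
  obtain ⟨τ, rfl⟩ := htrans x
  obtain ⟨σ, rfl⟩ := htrans y
  exact ⟨σ * τ⁻¹, by rw [← hmul, inv_mul_cancel_right]⟩

lemma Continuous.integrable_of_compactSpace {X : Type*} [TopologicalSpace X] [CompactSpace X]
    [MeasurableSpace X] [OpensMeasurableSpace X] {ν : Measure X} [IsFiniteMeasure ν]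
    {f : X → ℝ} (hf : Continuous f) : Integrable f ν :=
  hf.integrable_of_hasCompactSupport (.of_compactSpace f)

section FinProd

variable {M : Type*} [CommMonoid M] {N m : ℕ}

lemma Fin.map_castLEEmb_univ (h : m ≤ N) :
    Finset.univ.map (Fin.castLEEmb h) = Finset.univ.filter fun k : Fin N => k.val < m := by
  ext k
  simp only [Finset.mem_filter, Finset.mem_map, Finset.mem_univ, true_and, Fin.castLEEmb_apply]
  exact ⟨fun ⟨j, hj⟩ => hj ▸ j.isLt, fun hk => ⟨⟨k, hk⟩, rfl⟩⟩

lemma Fin.prod_eq_prod_castLE_mul (h : m ≤ N) (f : Fin N → M) :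
    ∏ k, f k = (∏ j : Fin m, f (Fin.castLE h j)) * ∏ k with m ≤ k.val, f k := by
  rw [← Finset.prod_filter_mul_prod_filter_not Finset.univ (fun k : Fin N => k.val < m),
    ← Fin.map_castLEEmb_univ h, Finset.prod_map]
  simp only [not_lt]
  rfl

end FinProd

instance (n : ℕ) [NeZero n] : IsFiniteMeasure (sphMeasure n) := by
  unfold sphMeasure; infer_instance

instance (n : ℕ) [NeZero n] : (sphMeasure n).IsOpenPosMeasure := by
  unfold sphMeasure; infer_instance

lemma sphMeasure_ne_zero (n : ℕ) [NeZero n] : sphMeasure n ≠ 0 := by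
  have : Nontrivial (Euc n) := by
    have := Fin.pos_iff_nonempty.1 (NeZero.pos n)
    infer_instance
  exact Measure.toSphere_ne_zero _

section StarBody

variable {n : ℕ}

lemma dilates_of_mul_eq_mul {K L : StarBody n} (u₀ : Sph n)
    (h : ∀ u v, K.radial u * L.radial v = K.radial v * L.radial u) : Dilates n K L :=
  ⟨K.radial u₀ / L.radial u₀, div_pos (K.pos u₀) (L.pos u₀), fun u => by
    rw [div_mul_eq_mul_div, eq_div_iff (L.pos u₀).ne', h]⟩

variable [NeZero n] {m i : ℕ} {K : StarBody n} {K' : Fin m → StarBody n}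

lemma dualQuermass_pow_le_prod_iff :
    dualQuermass n i K ^ m ≤ ∏ j, dualQuermass n i (K' j) ↔
      (∫ u, K.radial u ^ (n - i) ∂sphMeasure n) ^ m ≤
        ∏ j, ∫ u, (K' j).radial u ^ (n - i) ∂sphMeasure n := by
  simp only [dualQuermass, mul_pow, Finset.prod_mul_distrib, Finset.prod_const, Finset.card_univ,
    Fintype.card_fin]
  exact mul_le_mul_iff_right₀ (by have := NeZero.pos n; positivity)

lemma dualQuermass_pow_eq_prod_iff :
    dualQuermass n i K ^ m = ∏ j, dualQuermass n i (K' j) ↔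
      (∫ u, K.radial u ^ (n - i) ∂sphMeasure n) ^ m =
        ∏ j, ∫ u, (K' j).radial u ^ (n - i) ∂sphMeasure n := by
  simp only [dualQuermass, mul_pow, Finset.prod_mul_distrib, Finset.prod_const, Finset.card_univ,
    Fintype.card_fin]
  exact mul_right_inj' (by have := NeZero.pos n; positivity)

theorem dualQuermass_pow_le_prod_of_radial_pow_le_prod (hm : m ≠ 0)
    (h : ∀ v, K.radial v ^ m ≤ ∏ j, (K' j).radial v) :
    dualQuermass n i K ^ m ≤ ∏ j, dualQuermass n i (K' j) :=
  dualQuermass_pow_le_prod_iff.2 <| pow_integral_le_prod_integral_of_pow_le_prod hm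
    (sphMeasure_ne_zero n) (Continuous.integrable_of_compactSpace (by fun_prop))
    (fun j => Continuous.integrable_of_compactSpace (by fun_prop))
    (fun v => pow_nonneg (K.pos v).le _) (fun j v => pow_pos ((K' j).pos v) _)
    fun v => pow_pow_le_prod_pow (K.pos v).le (h v) _

theorem radial_pow_eq_prod_of_dualQuermass_pow_eq_prod (hi : i < n) (hm : m ≠ 0)
    (h : ∀ v, K.radial v ^ m ≤ ∏ j, (K' j).radial v)
    (heq : dualQuermass n i K ^ m = ∏ j, dualQuermass n i (K' j)) (v : Sph n) :
    K.radial v ^ m = ∏ j, (K' j).radial v := by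
  have := pow_eq_prod_of_pow_integral_eq_prod hm (sphMeasure_ne_zero n) (by fun_prop)
    (fun j => by fun_prop) (Continuous.integrable_of_compactSpace (by fun_prop))
    (fun j => Continuous.integrable_of_compactSpace (by fun_prop))
    (fun v => pow_nonneg (K.pos v).le _) (fun j v => pow_pos ((K' j).pos v) _)
    (fun v => pow_pow_le_prod_pow (K.pos v).le (h v) _)
    (dualQuermass_pow_eq_prod_iff.1 heq) v
  rw [← pow_mul, mul_comm, pow_mul, Finset.prod_pow] at this
  exact (pow_left_inj₀ (pow_nonneg (K.pos v).le m)
    (Finset.prod_nonneg fun j _ => ((K' j).pos v).le) (by omega)).1 this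

theorem radial_mul_eq_mul_of_dualQuermass_pow_eq_prod (hi : i < n) (hm : m ≠ 0)
    (h : ∀ v, K.radial v ^ m ≤ ∏ j, (K' j).radial v)
    (heq : dualQuermass n i K ^ m = ∏ j, dualQuermass n i (K' j)) (j k : Fin m) (v w : Sph n) :
    (K' j).radial v * (K' k).radial w = (K' j).radial w * (K' k).radial v := by
  have := mul_eq_mul_of_pow_integral_eq_prod hm (sphMeasure_ne_zero n)
    (fun j => by fun_prop) (Continuous.integrable_of_compactSpace (by fun_prop))
    (fun j => Continuous.integrable_of_compactSpace (by fun_prop))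
    (fun v => pow_nonneg (K.pos v).le _) (fun j v => pow_pos ((K' j).pos v) _)
    (fun v => pow_pow_le_prod_pow (K.pos v).le (h v) _)
    (dualQuermass_pow_eq_prod_iff.1 heq) j k v w
  rw [← mul_pow, ← mul_pow] at this
  exact (pow_left_inj₀ (mul_pos ((K' j).pos v) ((K' k).pos w)).le
    (mul_pos ((K' j).pos w) ((K' k).pos v)).le (by omega)).1 this

end StarBody

def repeatFirst {α : Type*} {N m : ℕ} (h : m ≤ N) (L : Fin N → α) (j : Fin m) : Fin N → α :=
  fun k => if (k : ℕ) < m then L (Fin.castLE h j) else L k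

lemma prod_repeatFirst {α M : Type*} [CommMonoid M] {N m : ℕ} (h : m ≤ N) (f : α → M)
    (L : Fin N → α) (j : Fin m) :
    ∏ k, f (repeatFirst h L j k) = f (L (Fin.castLE h j)) ^ m * ∏ k with m ≤ k.val, f (L k) := by
  rw [Fin.prod_eq_prod_castLE_mul h]
  congr 1
  · simp [repeatFirst]
  · refine Finset.prod_congr rfl fun k hk => ?_
    rw [repeatFirst, if_neg (not_lt.2 (Finset.mem_filter.1 hk).2)]

/-- `ρ(Ψ F, ·) = (ρ(F_1, ·) ⋯ ρ(F_{n-1}, ·)) ∗ μ`, the spherical convolution written out at the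
point `η e`. -/
def RepresentedBy {n : ℕ} {G : Type*} (Ψm : (Fin (n - 1) → StarBody n) → StarBody n)
    (act : G → Sph n → Sph n) (e : Sph n) (μ : Measure (Sph n)) : Prop :=
  ∀ (F : Fin (n - 1) → StarBody n) (η : G),
    (Ψm F).radial (act η e) = ∫ u, ∏ k, (F k).radial (act η u) ∂μ

section RadialBlaschkeMinkowski

variable {n m : ℕ} {G : Type*} {act : G → Sph n → Sph n} {e : Sph n} {μ : Measure (Sph n)}
  {Ψm : (Fin (n - 1) → StarBody n) → StarBody n} (hmN : m ≤ n - 1)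

lemma radial_act_eq_integral (hrep : RepresentedBy Ψm act e μ) (L : Fin (n - 1) → StarBody n)
    (η : G) :
    (Ψm L).radial (act η e) = ∫ u, (∏ j : Fin m, (L (Fin.castLE hmN j)).radial (act η u)) *
      ∏ k with m ≤ k.val, (L k).radial (act η u) ∂μ := by
  rw [hrep]
  simp_rw [Fin.prod_eq_prod_castLE_mul hmN]

lemma radial_repeatFirst_act_eq_integral (hrep : RepresentedBy Ψm act e μ)
    (L : Fin (n - 1) → StarBody n) (j : Fin m) (η : G) :
    (Ψm (repeatFirst hmN L j)).radial (act η e) = ∫ u, (L (Fin.castLE hmN j)).radial (act η u) ^ m *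
      ∏ k with m ≤ k.val, (L k).radial (act η u) ∂μ := by
  rw [hrep]
  congr 1 with u
  exact prod_repeatFirst hmN (fun K : StarBody n => K.radial (act η u)) L j

theorem pow_integral_radial_pow_eq_prod_of_dilates (hm : m ≠ 0)
    (htrans : ∀ v, ∃ η, act η e = v) (hrep : RepresentedBy Ψm act e μ)
    (L : Fin (n - 1) → StarBody n)
    (hD : ∀ j k : Fin m, Dilates n (L (Fin.castLE hmN j)) (L (Fin.castLE hmN k)))
    (ν : Measure (Sph n)) (p : ℕ) :
    (∫ u, (Ψm L).radial u ^ p ∂ν) ^ m = ∏ j, ∫ u, (Ψm (repeatFirst hmN L j)).radial u ^ p ∂ν := by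
  let j₀ : Fin m := ⟨0, Nat.pos_of_ne_zero hm⟩
  choose c hc hcL using fun j => hD j j₀
  refine pow_integral_pow_eq_prod_of_eq_mul (C := ∏ j, c j) (c := fun j => c j ^ m)
    (g := (Ψm (repeatFirst hmN L j₀)).radial) (fun v => ?_) (fun j v => ?_)
    (Finset.prod_pow _ _ _).symm p
  · obtain ⟨η, rfl⟩ := htrans v
    rw [radial_act_eq_integral hmN hrep, radial_repeatFirst_act_eq_integral hmN hrep,
      ← integral_const_mul]
    congr 1 with u
    rw [Finset.prod_congr rfl fun j _ => hcL j (act η u), Finset.prod_mul_distrib,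
      Finset.prod_const, Finset.card_univ, Fintype.card_fin]
    ring
  · obtain ⟨η, rfl⟩ := htrans v
    rw [radial_repeatFirst_act_eq_integral hmN hrep, radial_repeatFirst_act_eq_integral hmN hrep,
      ← integral_const_mul]
    congr 1 with u
    rw [hcL, mul_pow]
    ring

variable [IsFiniteMeasure μ]

theorem radial_pow_le_prod_radial_repeatFirst (hm : m ≠ 0) (hμ : μ ≠ 0)
    (hact : ∀ η, Continuous (act η)) (htrans : ∀ v, ∃ η, act η e = v)
    (hrep : RepresentedBy Ψm act e μ) (L : Fin (n - 1) → StarBody n) (v : Sph n) :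
    (Ψm L).radial v ^ m ≤ ∏ j, (Ψm (repeatFirst hmN L j)).radial v := by
  obtain ⟨η, rfl⟩ := htrans v
  rw [radial_act_eq_integral hmN hrep]
  simp_rw [radial_repeatFirst_act_eq_integral hmN hrep]
  have := hact η
  exact pow_integral_prod_mul_le hm hμ
    (fun j => Continuous.integrable_of_compactSpace (by fun_prop)) (fun j u => (L _).pos _)
    fun u => Finset.prod_pos fun k _ => (L k).pos _

lemma radial_repeatFirst_mul_pow_eq_of_radial_pow_eq_prod (hm : m ≠ 0) (hμ : μ ≠ 0)
    (hact : ∀ η, Continuous (act η)) (hrep : RepresentedBy Ψm act e μ)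
    (L : Fin (n - 1) → StarBody n) {u₀ : Sph n} (hu₀ : u₀ ∈ μ.support) (η : G)
    (heq : (Ψm L).radial (act η e) ^ m = ∏ j, (Ψm (repeatFirst hmN L j)).radial (act η e))
    (j k : Fin m) :
    (Ψm (repeatFirst hmN L k)).radial (act η e) *
        (L (Fin.castLE hmN j)).radial (act η u₀) ^ m =
      (Ψm (repeatFirst hmN L j)).radial (act η e) *
        (L (Fin.castLE hmN k)).radial (act η u₀) ^ m := by
  rw [radial_act_eq_integral hmN hrep] at heq
  simp_rw [radial_repeatFirst_act_eq_integral hmN hrep] at heq ⊢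
  have := hact η
  have hae := ae_integral_mul_pow_eq_of_pow_integral_prod_mul_eq hm hμ
    (fun j => Continuous.integrable_of_compactSpace (by fun_prop))
    (fun j u => (L _).pos _) (fun u => Finset.prod_pos fun k _ => (L k).pos _) heq
  refine Measure.apply_eq_of_ae_eq_of_mem_support ?_ ?_ (hae.mono fun u hu => hu j k) hu₀ <;>
    fun_prop

theorem dilates_of_radial_pow_eq_prod (hm : m ≠ 0) (hμ : μ ≠ 0)
    (hact : ∀ η, Continuous (act η)) (hsurj : ∀ u v, ∃ η, act η u = v)
    (hrep : RepresentedBy Ψm act e μ) (L : Fin (n - 1) → StarBody n)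
    (heq : ∀ v, (Ψm L).radial v ^ m = ∏ j, (Ψm (repeatFirst hmN L j)).radial v)
    (hcross : ∀ j k v w, (Ψm (repeatFirst hmN L j)).radial v * (Ψm (repeatFirst hmN L k)).radial w =
      (Ψm (repeatFirst hmN L j)).radial w * (Ψm (repeatFirst hmN L k)).radial v)
    (j k : Fin m) : Dilates n (L (Fin.castLE hmN j)) (L (Fin.castLE hmN k)) := by
  obtain ⟨u₀, hu₀⟩ := Measure.nonempty_support hμ
  refine dilates_of_mul_eq_mul e fun w w' => ?_
  obtain ⟨η, rfl⟩ := hsurj u₀ w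
  obtain ⟨η', rfl⟩ := hsurj u₀ w'
  have h := radial_repeatFirst_mul_pow_eq_of_radial_pow_eq_prod hmN hm hμ hact hrep L hu₀ η
    (heq _) j k
  have h' := radial_repeatFirst_mul_pow_eq_of_radial_pow_eq_prod hmN hm hμ hact hrep L hu₀ η'
    (heq _) j k
  have hc := hcross j k (act η e) (act η' e)
  -- `h` and `h'` express `(ρ(L_j, w) / ρ(L_k, w))^m` through the ratio of the `Ψ`-radial
  -- functions at `η e`, resp. `η' e`, and `hc` says that ratio is the same at both points.
  set ℓ := fun i w => (L (Fin.castLE hmN i)).radial w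
  set A := fun i => (Ψm (repeatFirst hmN L i)).radial (act η e)
  set B := fun i => (Ψm (repeatFirst hmN L i)).radial (act η' e)
  have hA : A k * B j ≠ 0 := mul_ne_zero ((Ψm _).pos _).ne' ((Ψm _).pos _).ne'
  rw [← pow_left_inj₀ (mul_pos ((L _).pos _) ((L _).pos _)).le
    (mul_pos ((L _).pos _) ((L _).pos _)).le hm]
  refine mul_left_cancel₀ hA ?_
  linear_combination (B j * ℓ k (act η' u₀) ^ m) * h - (A j * ℓ k (act η u₀) ^ m) * h' +
    (ℓ k (act η u₀) ^ m * ℓ j (act η' u₀) ^ m) * hc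

end RadialBlaschkeMinkowski

theorem stmt18_general (n m i : ℕ) [NeZero n]
    (hm : 2 ≤ m) (hmn : m ≤ n - 1) (hi : i ≤ n - 1)
    (G : Type*) [Group G] [TopologicalSpace G]
    (act : G → Sph n → Sph n)
    (hact_mul : ∀ η τ u, act (η * τ) u = act η (act τ u))
    (hact_cont : Continuous fun p : G × Sph n => act p.1 p.2)
    (e : Sph n)
    (htrans : ∀ u : Sph n, ∃ η : G, act η e = u)
    (μ : Measure (Sph n)) [IsFiniteMeasure μ] (hμne : μ ≠ 0)
    (Ψm : (Fin (n - 1) → StarBody n) → StarBody n)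
    (hrep : ∀ (F : Fin (n - 1) → StarBody n) (η : G),
      (Ψm F).radial (act η e) = ∫ u, ∏ k, (F k).radial (act η u) ∂μ)
    (L : Fin (n - 1) → StarBody n) :
    dualQuermass n i (Ψm L) ^ m ≤
      ∏ j : Fin m, dualQuermass n i
        (Ψm fun k => if (k : ℕ) < m then L (Fin.castLE hmn j) else L k) ∧
    (dualQuermass n i (Ψm L) ^ m =
      ∏ j : Fin m, dualQuermass n i
        (Ψm fun k => if (k : ℕ) < m then L (Fin.castLE hmn j) else L k) ↔
      ∀ j k : Fin m, Dilates n (L (Fin.castLE hmn j)) (L (Fin.castLE hmn k))) := by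
  have hm0 : m ≠ 0 := by omega
  have hin : i < n := by have := NeZero.ne n; omega
  have hact η : Continuous (act η) := hact_cont.comp (.prodMk_right η)
  have hρh := radial_pow_le_prod_radial_repeatFirst hmn hm0 hμne hact htrans hrep L
  change _ ≤ ∏ j, dualQuermass n i (Ψm (repeatFirst hmn L j)) ∧
    (_ = ∏ j, dualQuermass n i (Ψm (repeatFirst hmn L j)) ↔ _)
  refine ⟨dualQuermass_pow_le_prod_of_radial_pow_le_prod hm0 hρh, fun heq => ?_, fun hD => ?_⟩
  · exact dilates_of_radial_pow_eq_prod hmn hm0 hμne hact (exists_act_eq hact_mul htrans) hrep L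
      (radial_pow_eq_prod_of_dualQuermass_pow_eq_prod hin hm0 hρh heq)
      (radial_mul_eq_mul_of_dualQuermass_pow_eq_prod hin hm0 hρh heq)
  · exact dualQuermass_pow_eq_prod_iff.2 <|
      pow_integral_radial_pow_eq_prod_of_dilates hmn hm0 htrans hrep L hD _ _

/-- Dual Aleksandrov–Fenchel inequality for a nontrivial radial Blaschke Minkowski
homomorphism Ψ (represented by a nonzero nonnegative zonal measure μ, with mixed
operator ρ(Ψ(L_1,…,L_{n-1}),·) = (ρ(L_1,·)⋯ρ(L_{n-1},·)) ∗ μ):  for 2 ≤ m ≤ n-1 and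
0 ≤ i ≤ n-1, W̃_i(Ψ(L_1,…,L_{n-1}))^m ≤ ∏_{j=1}^m W̃_i(Ψ(L_j,…,L_j,L_{m+1},…,L_{n-1})),
with equality iff L_1,…,L_m are dilates. -/
theorem stmt18 (n m i : ℕ) (hn : 3 ≤ n) [NeZero n]
    (hm : 2 ≤ m) (hmn : m ≤ n - 1) (hi : i ≤ n - 1)
    (G : Type*) [Group G] [TopologicalSpace G] [IsTopologicalGroup G]
    [MeasurableSpace G] [BorelSpace G]
    (act : G → Sph n → Sph n)
    (hact_one : ∀ u, act 1 u = u)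
    (hact_mul : ∀ η τ u, act (η * τ) u = act η (act τ u))
    (hact_cont : Continuous fun p : G × Sph n => act p.1 p.2)
    (e : Sph n)
    (htrans : ∀ u : Sph n, ∃ η : G, act η e = u)
    (hinv : ∀ ϑ : G, (sphMeasure n).map (act ϑ) = sphMeasure n)
    (μ : Measure (Sph n)) [IsFiniteMeasure μ] (hμne : μ ≠ 0)
    (hzonal : ∀ ϑ : G, act ϑ e = e → μ.map (act ϑ) = μ)
    (Ψm : (Fin (n - 1) → StarBody n) → StarBody n)
    (hrep : ∀ (F : Fin (n - 1) → StarBody n) (η : G),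
      (Ψm F).radial (act η e) = ∫ u, ∏ k, (F k).radial (act η u) ∂μ)
    (L : Fin (n - 1) → StarBody n) :
    dualQuermass n i (Ψm L) ^ m ≤
      ∏ j : Fin m, dualQuermass n i
        (Ψm fun k => if (k : ℕ) < m then L (Fin.castLE hmn j) else L k) ∧
    (dualQuermass n i (Ψm L) ^ m =
      ∏ j : Fin m, dualQuermass n i
        (Ψm fun k => if (k : ℕ) < m then L (Fin.castLE hmn j) else L k) ↔
      ∀ j k : Fin m, Dilates n (L (Fin.castLE hmn j)) (L (Fin.castLE hmn k))) :=
  stmt18_general n m i hm hmn hi G act hact_mul hact_cont e htrans μ hμne Ψm hrep L
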